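/- arXiv:2505.20493 — 4 statements merged into one kernel-verified Lean document; each statement's English description precedes it below -/
import Mathlib

section
/- Let M ∈ H(div div, Ω; S) and v ∈ H²(Ω). Then the trace pairing ⟨tr_{dDiv}(M), v⟩ := (div div M, v)_{L²} − (M, ∇∇v)_{L²} satisfies the bound B ⟨tr_{dDiv}(M), v⟩ ≤ ‖M‖_{div div} ‖v‖_{Ggrad}, where ‖v‖²_{Ggrad} = m‖v‖² + B‖∇∇v + q²Tv‖² and ‖M‖²_{div div} = B‖M‖² + (B²/m)‖div div M + q² T:M‖². -/
open scoped InnerProductSpace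

/-!
Subtracting and adding `q² ⟪T:M, v⟫ = q² ⟪M, T v⟫` rewrites the pairing as
`⟪X, v⟫ - ⟪M, Y⟫` with `X = div div M + q² T:M` and `Y = ∇∇v + q² T v`. Cauchy–Schwarz in the
Hilbert spaces bounds `B` times it by `B (‖X‖ ‖v‖ + ‖M‖ ‖Y‖)`, and Cauchy–Schwarz in `ℝ²` for the
vectors `(√B ‖M‖, (B / √m) ‖X‖)` and `(√B ‖Y‖, √m ‖v‖)` turns this into the product of the two
weighted norms.
-/

theorem inner_sub_inner_eq_add_smul_of_adjoint {E F : Type*}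
    [NormedAddCommGroup E] [InnerProductSpace ℝ E] [NormedAddCommGroup F] [InnerProductSpace ℝ F]
    {S : E →L[ℝ] F} {T : F →L[ℝ] E} (hST : ∀ x y, ⟪S x, y⟫_ℝ = ⟪x, T y⟫_ℝ)
    (c : ℝ) (x : E) (y : F) (u : F) (w : E) :
    ⟪u, y⟫_ℝ - ⟪x, w⟫_ℝ = ⟪u + c • S x, y⟫_ℝ - ⟪x, w + c • T y⟫_ℝ := by
  simp only [inner_add_left, inner_add_right, real_inner_smul_left, real_inner_smul_right, hST]
  ring

theorem Real.mul_add_mul_le_sqrt_mul_sqrt (a b c d : ℝ) :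
    a * c + b * d ≤ √(a ^ 2 + b ^ 2) * √(c ^ 2 + d ^ 2) := by
  simpa [Fin.sum_univ_two] using Real.sum_mul_le_sqrt_mul_sqrt Finset.univ ![a, b] ![c, d]

theorem Real.mul_add_mul_le_sqrt_weighted {B m : ℝ} (hB : 0 ≤ B) (hm : 0 < m) (a x v y : ℝ) :
    B * (x * v + a * y) ≤ √(B * a ^ 2 + B ^ 2 / m * x ^ 2) * √(m * v ^ 2 + B * y ^ 2) := by
  have hsm : √m ≠ 0 := (Real.sqrt_pos.2 hm).ne'
  calc B * (x * v + a * y) = (√B * a) * (√B * y) + (B / √m * x) * (√m * v) := by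
        field_simp
        rw [Real.sq_sqrt hB]
        ring
    _ ≤ √((√B * a) ^ 2 + (B / √m * x) ^ 2) * √((√B * y) ^ 2 + (√m * v) ^ 2) :=
        Real.mul_add_mul_le_sqrt_mul_sqrt _ _ _ _
    _ = √(B * a ^ 2 + B ^ 2 / m * x ^ 2) * √(m * v ^ 2 + B * y ^ 2) := by
        simp only [mul_pow, div_pow, Real.sq_sqrt hB, Real.sq_sqrt hm.le, add_comm (B * y ^ 2)]

/- `𝕊`, `𝕃` stand for `L²(Ω; S)`, `L²(Ω)`; `Mt`, `Md` for `M`, `div div M`; `v0`, `vh` for `v`, `∇∇v`;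
`Tc M = T:M` and `Tm v = T v`. -/
theorem stmt_5_general {𝕊 𝕃 : Type*} [NormedAddCommGroup 𝕊] [InnerProductSpace ℝ 𝕊]
    [NormedAddCommGroup 𝕃] [InnerProductSpace ℝ 𝕃]
    (B m q : ℝ) (hB : 0 < B) (hm : 0 < m)
    (Tc : 𝕊 →L[ℝ] 𝕃) (Tm : 𝕃 →L[ℝ] 𝕊)
    (hadj : ∀ (N : 𝕊) (w : 𝕃), ⟪Tc N, w⟫_ℝ = ⟪N, Tm w⟫_ℝ)
    (Mt : 𝕊) (Md : 𝕃) (v0 : 𝕃) (vh : 𝕊) :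
    B * (⟪Md, v0⟫_ℝ - ⟪Mt, vh⟫_ℝ) ≤
      Real.sqrt (B * ‖Mt‖ ^ 2 + B ^ 2 / m * ‖Md + q ^ 2 • Tc Mt‖ ^ 2) *
        Real.sqrt (m * ‖v0‖ ^ 2 + B * ‖vh + q ^ 2 • Tm v0‖ ^ 2) := by
  set X := Md + q ^ 2 • Tc Mt
  set Y := vh + q ^ 2 • Tm v0
  have hpair : ⟪X, v0⟫_ℝ - ⟪Mt, Y⟫_ℝ ≤ ‖X‖ * ‖v0‖ + ‖Mt‖ * ‖Y‖ := by
    linarith [real_inner_le_norm X v0, neg_le_of_abs_le (abs_real_inner_le_norm Mt Y)]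
  calc B * (⟪Md, v0⟫_ℝ - ⟪Mt, vh⟫_ℝ) = B * (⟪X, v0⟫_ℝ - ⟪Mt, Y⟫_ℝ) := by
        rw [inner_sub_inner_eq_add_smul_of_adjoint hadj (q ^ 2)]
    _ ≤ B * (‖X‖ * ‖v0‖ + ‖Mt‖ * ‖Y‖) := by gcongr
    _ ≤ _ := Real.mul_add_mul_le_sqrt_weighted hB.le hm _ _ _ _

theorem stmt_5 {𝕊 𝕃 : Type*} [NormedAddCommGroup 𝕊] [InnerProductSpace ℝ 𝕊]
    [NormedAddCommGroup 𝕃] [InnerProductSpace ℝ 𝕃]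
    (B m q : ℝ) (hB : 0 < B) (hB1 : B ≤ 1) (hm : 0 < m) (hq : 0 < q)
    (Tc : 𝕊 →L[ℝ] 𝕃) (Tm : 𝕃 →L[ℝ] 𝕊)
    (hadj : ∀ (N : 𝕊) (w : 𝕃), ⟪Tc N, w⟫_ℝ = ⟪N, Tm w⟫_ℝ)
    (Mt : 𝕊) (Md : 𝕃) (v0 : 𝕃) (vh : 𝕊) :
    B * (⟪Md, v0⟫_ℝ - ⟪Mt, vh⟫_ℝ) ≤
      Real.sqrt (B * ‖Mt‖ ^ 2 + B ^ 2 / m * ‖Md + q ^ 2 • Tc Mt‖ ^ 2) *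
        Real.sqrt (m * ‖v0‖ ^ 2 + B * ‖vh + q ^ 2 • Tm v0‖ ^ 2) :=
  stmt_5_general B m q hB hm Tc Tm hadj Mt Md v0 vh
end

section
/- Under the assumptions of the linear model, the problem: find M ∈ H(div div, Ω; S) with the prescribed essential trace condition ⟨tr_{dDiv}(M), δu⟩ = ⟨tr_{dDiv}(G), δu⟩ for all δu ∈ H²_D(Ω), and satisfying ⟨M, δM⟩_{div div} = (B/m)(f, div div δM + q² T:δM) − B⟨tr_{Ggrad}(g), δM⟩ for all δM ∈ H_N(div div, Ω; S), has a unique solution M with ‖M‖_{div div} ≤ (1/√m)‖f‖ + 2‖G‖_{div div} + ‖g‖_{Ggrad}. -/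
/-! The solution is `G` plus an element of the closed subspace `H_N`, determined by the Riesz
representation of the load functional restricted to `H_N` (equivalently, an orthogonal projection).
Testing the equation with `M - G` gives `‖M - G‖ ≤ ‖ℓ‖ + ‖G‖` on `H_N`. The load functional is
bounded after moving `T` onto `g` with the adjoint: the `f`-term is controlled by the
`div div M + q² T:M` part of the norm, and the two `g`-terms together by a weighted
Cauchy–Schwarz inequality against the whole norm. -/

open scoped InnerProductSpace

lemma isClosed_iInf_ker {X : Type*} {ι : Sort*} [NormedAddCommGroup X] [NormedSpace ℝ X]
    (φ : ι → StrongDual ℝ X) :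
    IsClosed ((⨅ i, (φ i : X →ₗ[ℝ] ℝ).ker : Submodule ℝ X) : Set X) := by
  rw [Submodule.coe_iInf]
  exact isClosed_iInter fun i ↦ (φ i).isClosed_ker

instance hasOrthogonalProjection_iInf_ker {X : Type*} {ι : Sort*} [NormedAddCommGroup X]
    [InnerProductSpace ℝ X] [CompleteSpace X] (φ : ι → StrongDual ℝ X) :
    (⨅ i, (φ i : X →ₗ[ℝ] ℝ).ker : Submodule ℝ X).HasOrthogonalProjection :=
  have := (isClosed_iInf_ker φ).completeSpace_coe
  inferInstance

lemma weighted_mul_add_mul_le_sqrt_mul_sqrt {c₁ c₂ : ℝ} (h₁ : 0 ≤ c₁) (h₂ : 0 ≤ c₂)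
    (a b a' b' : ℝ) :
    c₁ * (a * b) + c₂ * (a' * b') ≤
      √(c₁ * a ^ 2 + c₂ * a' ^ 2) * √(c₁ * b ^ 2 + c₂ * b' ^ 2) := by
  rw [← Real.sqrt_mul (by positivity)]
  refine (le_abs_self _).trans (Real.abs_le_sqrt ?_)
  nlinarith [sq_nonneg (a * b' - a' * b), mul_nonneg h₁ h₂]

section Hilbert

variable {X : Type*} [NormedAddCommGroup X] [InnerProductSpace ℝ X]

theorem existsUnique_sub_mem_inner_eq [CompleteSpace X] (K : Submodule ℝ X)
    [K.HasOrthogonalProjection] (G : X) (ℓ : StrongDual ℝ X) :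
    ∃! M : X, M - G ∈ K ∧ ∀ δ ∈ K, ⟪M, δ⟫_ℝ = ℓ δ := by
  let L := (InnerProductSpace.toDual ℝ X).symm ℓ
  refine existsUnique_of_exists_of_unique
    ⟨G + K.starProjection (L - G), ?_, fun δ hδ ↦ ?_⟩ ?_
  · rw [add_sub_cancel_left]
    exact K.starProjection_apply_mem _
  · have h := K.starProjection_inner_eq_zero (L - G) δ hδ
    rw [← InnerProductSpace.toDual_symm_apply (x := δ) (y := ℓ)]
    simp only [inner_sub_left] at h
    rw [inner_add_left]
    linarith
  · rintro M₁ M₂ ⟨h₁G, h₁⟩ ⟨h₂G, h₂⟩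
    have hK : M₁ - M₂ ∈ K := sub_sub_sub_cancel_right M₁ M₂ G ▸ K.sub_mem h₁G h₂G
    rw [← sub_eq_zero, ← inner_self_eq_zero (𝕜 := ℝ), inner_sub_left, h₁ _ hK, h₂ _ hK,
      sub_self]

theorem norm_le_of_sub_mem_of_inner_le {K : Submodule ℝ X} {M G : X} {C : ℝ} (hC : 0 ≤ C)
    (hMG : M - G ∈ K) (hM : ∀ δ ∈ K, ⟪M, δ⟫_ℝ ≤ C * ‖δ‖) : ‖M‖ ≤ C + 2 * ‖G‖ := by
  let w := M - G
  have hw : ‖w‖ ^ 2 ≤ (C + ‖G‖) * ‖w‖ := by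
    rw [← real_inner_self_eq_norm_sq, inner_sub_left]
    linarith [hM w hMG, neg_abs_le ⟪G, w⟫_ℝ, abs_real_inner_le_norm G w]
  calc ‖M‖ = ‖w + G‖ := by rw [sub_add_cancel]
    _ ≤ ‖w‖ + ‖G‖ := norm_add_le w G
    _ ≤ C + 2 * ‖G‖ := by nlinarith [norm_nonneg w, norm_nonneg G]

end Hilbert

/-- Here `r`, `s`, `e` stand for `‖M‖_{div div}`, `M` and `div div M + q² T:M`. -/
lemma inner_combination_le_of_sq_eq {E F : Type*} [NormedAddCommGroup E] [InnerProductSpace ℝ E]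
    [NormedAddCommGroup F] [InnerProductSpace ℝ F] {B m r : ℝ} (hB : 0 < B) (hm : 0 < m)
    (hr : 0 ≤ r) {s p : E} {e f w : F} (h : r ^ 2 = B * ‖s‖ ^ 2 + B ^ 2 / m * ‖e‖ ^ 2) :
    B / m * ⟪f, e⟫_ℝ + (B * ⟪s, p⟫_ℝ - B * ⟪e, w⟫_ℝ) ≤
      (1 / √m * ‖f‖ + √(m * ‖w‖ ^ 2 + B * ‖p‖ ^ 2)) * r := by
  have hsm : √m ^ 2 = m := Real.sq_sqrt hm.le
  have hsm₀ : 0 < √m := Real.sqrt_pos.2 hm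
  have he : B / √m * ‖e‖ ≤ r := by
    refine le_of_sq_le_sq ?_ hr
    rw [mul_pow, div_pow, hsm, h]
    nlinarith [mul_nonneg hB.le (sq_nonneg ‖s‖)]
  have h₁ : B / m * ⟪f, e⟫_ℝ ≤ 1 / √m * ‖f‖ * r :=
    calc B / m * ⟪f, e⟫_ℝ ≤ B / m * (‖f‖ * ‖e‖) := by gcongr; exact real_inner_le_norm f e
      _ = 1 / √m * ‖f‖ * (B / √m * ‖e‖) := by field_simp; rw [hsm]; ring
      _ ≤ 1 / √m * ‖f‖ * r := by gcongr
  have h₂ : B * ⟪s, p⟫_ℝ - B * ⟪e, w⟫_ℝ ≤ √(m * ‖w‖ ^ 2 + B * ‖p‖ ^ 2) * r :=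
    calc B * ⟪s, p⟫_ℝ - B * ⟪e, w⟫_ℝ
        ≤ B * (‖s‖ * ‖p‖) + B ^ 2 / m * (‖e‖ * (m / B * ‖w‖)) := by
          have hew : B ^ 2 / m * (‖e‖ * (m / B * ‖w‖)) = B * (‖e‖ * ‖w‖) := by field_simp
          rw [hew]
          nlinarith [real_inner_le_norm s p, neg_abs_le ⟪e, w⟫_ℝ, abs_real_inner_le_norm e w]
      _ ≤ √(B * ‖s‖ ^ 2 + B ^ 2 / m * ‖e‖ ^ 2) * √(B * ‖p‖ ^ 2 + B ^ 2 / m * (m / B * ‖w‖) ^ 2) :=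
          weighted_mul_add_mul_le_sqrt_mul_sqrt hB.le (by positivity) _ _ _ _
      _ = √(m * ‖w‖ ^ 2 + B * ‖p‖ ^ 2) * r := by
          rw [← h, Real.sqrt_sq hr, mul_comm]
          congr 2
          field_simp
          ring
  linarith

theorem stmt_7_general {𝕊 𝕃 X V : Type*}
    [NormedAddCommGroup 𝕊] [InnerProductSpace ℝ 𝕊]
    [NormedAddCommGroup 𝕃] [InnerProductSpace ℝ 𝕃]
    [NormedAddCommGroup X] [InnerProductSpace ℝ X] [CompleteSpace X]
    [AddCommGroup V] [Module ℝ V]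
    (B m q : ℝ) (hB : 0 < B) (hm : 0 < m)
    (ι : X →L[ℝ] 𝕊) (D : X →L[ℝ] 𝕃)
    (Tc : 𝕊 →L[ℝ] 𝕃) (Tm : 𝕃 →L[ℝ] 𝕊)
    (hadj : ∀ (N : 𝕊) (w : 𝕃), ⟪Tc N, w⟫_ℝ = ⟪N, Tm w⟫_ℝ)
    (hX : ∀ M N : X, ⟪M, N⟫_ℝ =
      B * ⟪ι M, ι N⟫_ℝ +
        B ^ 2 / m * ⟪D M + q ^ 2 • Tc (ι M), D N + q ^ 2 • Tc (ι N)⟫_ℝ)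
    (jv : V →ₗ[ℝ] 𝕃) (hs : V →ₗ[ℝ] 𝕊) (VD : Submodule ℝ V)
    (trD : X → V → ℝ)
    (htrD : ∀ (M : X) (v : V), trD M v = ⟪D M, jv v⟫_ℝ - ⟪ι M, hs v⟫_ℝ)
    (f : 𝕃) (g : V) (G : X) :
    (∃! M : X,
      (∀ v ∈ VD, trD M v = trD G v) ∧
      (∀ δM : X, (∀ v ∈ VD, trD δM v = 0) →
        ⟪M, δM⟫_ℝ = B / m * ⟪f, D δM + q ^ 2 • Tc (ι δM)⟫_ℝ
          - B * (⟪D δM, jv g⟫_ℝ - ⟪ι δM, hs g⟫_ℝ))) ∧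
    (∀ M : X,
      ((∀ v ∈ VD, trD M v = trD G v) ∧
       (∀ δM : X, (∀ v ∈ VD, trD δM v = 0) →
         ⟪M, δM⟫_ℝ = B / m * ⟪f, D δM + q ^ 2 • Tc (ι δM)⟫_ℝ
           - B * (⟪D δM, jv g⟫_ℝ - ⟪ι δM, hs g⟫_ℝ))) →
      ‖M‖ ≤ (1 / Real.sqrt m) * ‖f‖ + 2 * ‖G‖ +
        Real.sqrt (m * ‖jv g‖ ^ 2 + B * ‖hs g + q ^ 2 • Tm (jv g)‖ ^ 2)) := by
  let tr : V → StrongDual ℝ X := fun v ↦ (innerSL ℝ (jv v)).comp D - (innerSL ℝ (hs v)).comp ι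
  have htr : ∀ M v, trD M v = tr v M := fun M v ↦ by simp [tr, htrD, real_inner_comm]
  let K := ⨅ v : VD, (tr v : X →ₗ[ℝ] ℝ).ker
  have hK : ∀ M, (∀ v ∈ VD, trD M v = trD G v) ↔ M - G ∈ K := by
    simp [K, Submodule.mem_iInf, htr, sub_eq_zero]
  have hK₀ : ∀ δ, (∀ v ∈ VD, trD δ v = 0) ↔ δ ∈ K := by simp [K, Submodule.mem_iInf, htr]
  let ℓ : StrongDual ℝ X := (B / m) • (innerSL ℝ f).comp (D + q ^ 2 • Tc.comp ι) -
    B • ((innerSL ℝ (jv g)).comp D - (innerSL ℝ (hs g)).comp ι)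
  have hℓ : ∀ δ, ℓ δ = B / m * ⟪f, D δ + q ^ 2 • Tc (ι δ)⟫_ℝ
      - B * (⟪D δ, jv g⟫_ℝ - ⟪ι δ, hs g⟫_ℝ) := fun δ ↦ by
    simp [ℓ, real_inner_comm, inner_add_right, real_inner_smul_right, mul_add]
  have hℓ_le : ∀ δ, ℓ δ ≤ (1 / √m * ‖f‖ +
      √(m * ‖jv g‖ ^ 2 + B * ‖hs g + q ^ 2 • Tm (jv g)‖ ^ 2)) * ‖δ‖ := fun δ ↦ by
    -- the adjoint moves `T` from the test tensor onto `g`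
    have hℓδ : ℓ δ = B / m * ⟪f, D δ + q ^ 2 • Tc (ι δ)⟫_ℝ +
        (B * ⟪ι δ, hs g + q ^ 2 • Tm (jv g)⟫_ℝ - B * ⟪D δ + q ^ 2 • Tc (ι δ), jv g⟫_ℝ) := by
      simp only [hℓ, inner_add_left, inner_add_right, real_inner_smul_left,
        real_inner_smul_right, hadj]
      ring
    rw [hℓδ]
    exact inner_combination_le_of_sq_eq hB hm (norm_nonneg δ)
      (by simpa only [real_inner_self_eq_norm_sq] using hX δ δ)
  simp only [hK, hK₀, ← hℓ]
  refine ⟨existsUnique_sub_mem_inner_eq K G ℓ, fun M ⟨hMG, hM⟩ ↦ ?_⟩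
  have := norm_le_of_sub_mem_of_inner_le (by positivity) hMG
    (fun δ hδ ↦ (hM δ hδ).trans_le (hℓ_le δ))
  linarith

theorem stmt_7 {𝕊 𝕃 X V : Type*}
    [NormedAddCommGroup 𝕊] [InnerProductSpace ℝ 𝕊]
    [NormedAddCommGroup 𝕃] [InnerProductSpace ℝ 𝕃]
    [NormedAddCommGroup X] [InnerProductSpace ℝ X] [CompleteSpace X]
    [AddCommGroup V] [Module ℝ V]
    (B m q : ℝ) (hB : 0 < B) (hB1 : B ≤ 1) (hm : 0 < m) (hq : 0 < q)
    (ι : X →L[ℝ] 𝕊) (D : X →L[ℝ] 𝕃)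
    (Tc : 𝕊 →L[ℝ] 𝕃) (Tm : 𝕃 →L[ℝ] 𝕊)
    (hadj : ∀ (N : 𝕊) (w : 𝕃), ⟪Tc N, w⟫_ℝ = ⟪N, Tm w⟫_ℝ)
    (hX : ∀ M N : X, ⟪M, N⟫_ℝ =
      B * ⟪ι M, ι N⟫_ℝ +
        B ^ 2 / m * ⟪D M + q ^ 2 • Tc (ι M), D N + q ^ 2 • Tc (ι N)⟫_ℝ)
    (jv : V →ₗ[ℝ] 𝕃) (hs : V →ₗ[ℝ] 𝕊) (VD : Submodule ℝ V)
    (trD : X → V → ℝ)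
    (htrD : ∀ (M : X) (v : V), trD M v = ⟪D M, jv v⟫_ℝ - ⟪ι M, hs v⟫_ℝ)
    (f : 𝕃) (g : V) (G : X) :
    (∃! M : X,
      (∀ v ∈ VD, trD M v = trD G v) ∧
      (∀ δM : X, (∀ v ∈ VD, trD δM v = 0) →
        ⟪M, δM⟫_ℝ = B / m * ⟪f, D δM + q ^ 2 • Tc (ι δM)⟫_ℝ
          - B * (⟪D δM, jv g⟫_ℝ - ⟪ι δM, hs g⟫_ℝ))) ∧
    (∀ M : X,
      ((∀ v ∈ VD, trD M v = trD G v) ∧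
       (∀ δM : X, (∀ v ∈ VD, trD δM v = 0) →
         ⟪M, δM⟫_ℝ = B / m * ⟪f, D δM + q ^ 2 • Tc (ι δM)⟫_ℝ
           - B * (⟪D δM, jv g⟫_ℝ - ⟪ι δM, hs g⟫_ℝ))) →
      ‖M‖ ≤ (1 / Real.sqrt m) * ‖f‖ + 2 * ‖G‖ +
        Real.sqrt (m * ‖jv g‖ ^ 2 + B * ‖hs g + q ^ 2 • Tm (jv g)‖ ^ 2)) :=
  stmt_7_general B m q hB hm ι D Tc Tm hadj hX jv hs VD trD htrD f g G
end

section
/- Under the relation M = ∇∇u + q²Tu with u given by the postprocessing formula u = (1/m)f − (B/m)(div div M + q²T:M), the energy norm of u is bounded by ‖u‖_{Ggrad} ≤ (1/√m)‖f‖ + √2 ‖M‖_{div div}. -/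
/- Substituting `M = ∇∇u + q²Tu` turns the left side into `√(m‖u‖² + B‖M‖²)`. The postprocessing
formula gives `m‖u‖ ≤ ‖f‖ + B‖div div M + q²T:M‖`, so after the ℓ²–ℓ¹ comparison
`√(a² + b²) ≤ a + b` everything except `‖f‖/√m` is `√B‖M‖ + (B/√m)‖div div M + q²T:M‖`,
and `a + b ≤ √2 √(a² + b²)` recombines this into `√2 ‖M‖_{div div}`. -/

theorem Real.sqrt_sq_add_sq_le_add {a b : ℝ} (ha : 0 ≤ a) (hb : 0 ≤ b) :
    √(a ^ 2 + b ^ 2) ≤ a + b :=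
  Real.sqrt_le_iff.2 ⟨add_nonneg ha hb, by nlinarith [mul_nonneg ha hb]⟩

theorem Real.add_le_sqrt_two_mul_sqrt_sq_add_sq (a b : ℝ) :
    a + b ≤ √2 * √(a ^ 2 + b ^ 2) := by
  rw [← Real.sqrt_mul zero_le_two]
  exact (le_abs_self _).trans (Real.abs_le_sqrt add_sq_le)

theorem stmt_10_general {𝕊 𝕃 : Type*} [NormedAddCommGroup 𝕊] [InnerProductSpace ℝ 𝕊]
    [NormedAddCommGroup 𝕃] [InnerProductSpace ℝ 𝕃]
    (B m q : ℝ) (hB : 0 < B) (hm : 0 < m)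
    (Tc : 𝕊 →L[ℝ] 𝕃) (Tm : 𝕃 →L[ℝ] 𝕊)
    (f : 𝕃) (u0 : 𝕃) (uh : 𝕊) (Mt : 𝕊) (Md : 𝕃)
    (hM : Mt = uh + q ^ 2 • Tm u0)
    (hu : u0 = (1 / m) • f - (B / m) • (Md + q ^ 2 • Tc Mt)) :
    Real.sqrt (m * ‖u0‖ ^ 2 + B * ‖uh + q ^ 2 • Tm u0‖ ^ 2)
      ≤ (1 / Real.sqrt m) * ‖f‖ +
        Real.sqrt 2 * Real.sqrt (B * ‖Mt‖ ^ 2 + B ^ 2 / m * ‖Md + q ^ 2 • Tc Mt‖ ^ 2) := by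
  rw [← hM]
  set N := ‖Md + q ^ 2 • Tc Mt‖
  have hu_norm : ‖u0‖ ≤ 1 / m * ‖f‖ + B / m * N := by
    rw [hu]
    refine (norm_sub_le _ _).trans_eq ?_
    rw [norm_smul, norm_smul, Real.norm_of_nonneg (by positivity),
      Real.norm_of_nonneg (by positivity)]
  have hu_scaled : √m * ‖u0‖ ≤ 1 / √m * ‖f‖ + B / √m * N := by
    calc √m * ‖u0‖ ≤ √m * (1 / m * ‖f‖ + B / m * N) := by gcongr
      _ = 1 / √m * ‖f‖ + B / √m * N := by
        field_simp
        rw [Real.sq_sqrt hm.le]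
  calc √(m * ‖u0‖ ^ 2 + B * ‖Mt‖ ^ 2) = √((√m * ‖u0‖) ^ 2 + (√B * ‖Mt‖) ^ 2) := by
        rw [mul_pow, mul_pow, Real.sq_sqrt hm.le, Real.sq_sqrt hB.le]
    _ ≤ √m * ‖u0‖ + √B * ‖Mt‖ := Real.sqrt_sq_add_sq_le_add (by positivity) (by positivity)
    _ ≤ 1 / √m * ‖f‖ + (√B * ‖Mt‖ + B / √m * N) := by linarith
    _ ≤ 1 / √m * ‖f‖ + √2 * √((√B * ‖Mt‖) ^ 2 + (B / √m * N) ^ 2) := by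
        gcongr; exact Real.add_le_sqrt_two_mul_sqrt_sq_add_sq _ _
    _ = 1 / √m * ‖f‖ + √2 * √(B * ‖Mt‖ ^ 2 + B ^ 2 / m * N ^ 2) := by
        rw [mul_pow, mul_pow, div_pow, Real.sq_sqrt hm.le, Real.sq_sqrt hB.le]

theorem stmt_10 {𝕊 𝕃 : Type*} [NormedAddCommGroup 𝕊] [InnerProductSpace ℝ 𝕊]
    [NormedAddCommGroup 𝕃] [InnerProductSpace ℝ 𝕃]
    (B m q : ℝ) (hB : 0 < B) (hB1 : B ≤ 1) (hm : 0 < m) (hq : 0 < q)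
    (Tc : 𝕊 →L[ℝ] 𝕃) (Tm : 𝕃 →L[ℝ] 𝕊)
    (f : 𝕃) (u0 : 𝕃) (uh : 𝕊) (Mt : 𝕊) (Md : 𝕃)
    (hM : Mt = uh + q ^ 2 • Tm u0)
    (hu : u0 = (1 / m) • f - (B / m) • (Md + q ^ 2 • Tc Mt)) :
    Real.sqrt (m * ‖u0‖ ^ 2 + B * ‖uh + q ^ 2 • Tm u0‖ ^ 2)
      ≤ (1 / Real.sqrt m) * ‖f‖ +
        Real.sqrt 2 * Real.sqrt (B * ‖Mt‖ ^ 2 + B ^ 2 / m * ‖Md + q ^ 2 • Tc Mt‖ ^ 2) :=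
  stmt_10_general B m q hB hm Tc Tm f u0 uh Mt Md hM hu
end

section
/- A priori convergence rate for the discrete tensor: if u ∈ H^s(Ω), M ∈ H^r(Ω; S) and div div M ∈ H^t(Ω) with s, t ∈ (0,2], r ∈ (3/2, 2], and the interpolation operator satisfies ‖M − Π M‖ ≤ C h^{min{r,2}}‖M‖_r and ‖div div(M − Π M)‖ ≤ C h^{min{t,2}}‖div div M‖_t, then the quasi-optimal Galerkin solution M_h satisfies ‖M − M_h‖_{div div} ≤ C h^{min{r,t}}(√B(1 + √(B/m) q²)‖M‖_r + (B/√m)‖div div M‖_t). -/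
/- Quasi-optimality reduces the error to the interpolation error in the div-div norm. Its
L² part is controlled directly, and its divergence part `div div (M - Π M) + q² T:(M - Π M)`
by the triangle inequality, the second summand again by the L² interpolation error. Since
`h ≤ 1`, every power of `h` occurring is at most `h ^ min r t`, so `C = Cint + Cint²` works. -/

open Real

lemma sqrt_mul_sq_add_mul_sq_le {a b x y : ℝ} (ha : 0 ≤ a) (hb : 0 ≤ b) (hx : 0 ≤ x)
    (hy : 0 ≤ y) : √(a * x ^ 2 + b * y ^ 2) ≤ √a * x + √b * y := by
  rw [sqrt_le_iff]
  refine ⟨by positivity, ?_⟩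
  have hcross : 0 ≤ √a * x * (√b * y) := by positivity
  nlinarith [sq_sqrt ha, sq_sqrt hb]

lemma sqrt_sq_div {a : ℝ} (ha : 0 ≤ a) (b : ℝ) : √(a ^ 2 / b) = a / √b := by
  rw [sqrt_div (sq_nonneg a), sqrt_sq ha]

lemma sqrt_mul_sqrt_div_self {a : ℝ} (ha : 0 ≤ a) (b : ℝ) : √a * √(a / b) = a / √b := by
  rw [sqrt_div ha, ← mul_div_assoc, mul_self_sqrt ha]

lemma norm_add_smul_sub_add_smul_le {E F : Type*} [NormedAddCommGroup E] [NormedSpace ℝ E]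
    [NormedAddCommGroup F] [NormedSpace ℝ F] {T : E →L[ℝ] F} {K : ℝ}
    (hT : ∀ N, ‖T N‖ ≤ K * ‖N‖) (c : ℝ) (x x' : E) (d d' : F) :
    ‖(d + c • T x) - (d' + c • T x')‖ ≤ ‖d - d'‖ + |c| * (K * ‖x - x'‖) := by
  have hsplit : (d + c • T x) - (d' + c • T x') = (d - d') + c • T (x - x') := by
    rw [map_sub, smul_sub]; abel
  calc ‖(d + c • T x) - (d' + c • T x')‖ ≤ ‖d - d'‖ + ‖c • T (x - x')‖ := by
        rw [hsplit]; exact norm_add_le _ _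
    _ ≤ ‖d - d'‖ + |c| * (K * ‖x - x'‖) := by
        rw [norm_smul, norm_eq_abs]; gcongr; exact hT _

/- `Mr = ‖M‖_{H^r}`, `Dt = ‖div div M‖_{H^t}`; `Mt, Md` (resp. `PMt, PMd`; `Mht, Mhd`) are
`M` and `div div M` (resp. for `Π M`; `M_h`), and `Tc` is `N ↦ T:N`. -/
theorem stmt_19 {𝕊 𝕃 : Type*} [NormedAddCommGroup 𝕊] [InnerProductSpace ℝ 𝕊]
    [NormedAddCommGroup 𝕃] [InnerProductSpace ℝ 𝕃] :
    ∀ Cint : ℝ, 0 < Cint → ∃ C : ℝ, 0 < C ∧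
      ∀ (B m q h r t Mr Dt : ℝ)
        (Tc : 𝕊 →L[ℝ] 𝕃) (Mt PMt Mht : 𝕊) (Md PMd Mhd : 𝕃),
        0 < B → B ≤ 1 → 0 < m → 0 < q → 0 < h → h ≤ 1 →
        3 / 2 < r → r ≤ 2 → 0 < t → t ≤ 2 → 0 ≤ Mr → 0 ≤ Dt →
        (∀ N : 𝕊, ‖Tc N‖ ≤ Cint * ‖N‖) →
        ‖Mt - PMt‖ ≤ Cint * h ^ min r 2 * Mr →
        ‖Md - PMd‖ ≤ Cint * h ^ min t 2 * Dt →
        Real.sqrt (B * ‖Mt - Mht‖ ^ 2 +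
            B ^ 2 / m * ‖(Md + q ^ 2 • Tc Mt) - (Mhd + q ^ 2 • Tc Mht)‖ ^ 2)
          ≤ Real.sqrt (B * ‖Mt - PMt‖ ^ 2 +
              B ^ 2 / m * ‖(Md + q ^ 2 • Tc Mt) - (PMd + q ^ 2 • Tc PMt)‖ ^ 2) →
        Real.sqrt (B * ‖Mt - Mht‖ ^ 2 +
            B ^ 2 / m * ‖(Md + q ^ 2 • Tc Mt) - (Mhd + q ^ 2 • Tc Mht)‖ ^ 2)
          ≤ C * h ^ min r t *
              (Real.sqrt B * (1 + Real.sqrt (B / m) * q ^ 2) * Mr +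
                B / Real.sqrt m * Dt) := by
  intro Cint hCint
  refine ⟨Cint + Cint ^ 2, by positivity, ?_⟩
  intro B m q h r t Mr Dt Tc Mt PMt Mht Md PMd Mhd hB _ hm _ hh hh1 _ hr2 _ ht2 hMr hDt hTc
    hMP hDP hGal
  set ε := h ^ min r t
  have hεr : h ^ min r 2 ≤ ε := rpow_le_rpow_of_exponent_ge hh hh1 (min_le_min_left r ht2)
  have hεt : h ^ min t 2 ≤ ε :=
    rpow_le_rpow_of_exponent_ge hh hh1 (le_min (min_le_right r t) ((min_le_left r t).trans hr2))
  have hL2 : ‖Mt - PMt‖ ≤ Cint * ε * Mr := hMP.trans (by gcongr)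
  have hdivdiv : ‖(Md + q ^ 2 • Tc Mt) - (PMd + q ^ 2 • Tc PMt)‖
      ≤ Cint * ε * Dt + q ^ 2 * (Cint * (Cint * ε * Mr)) := by
    refine (norm_add_smul_sub_add_smul_le hTc _ _ _ _ _).trans ?_
    rw [abs_of_nonneg (by positivity)]
    gcongr
    exact hDP.trans (by gcongr)
  calc _ ≤ _ := hGal
    _ ≤ √B * ‖Mt - PMt‖
        + B / √m * ‖(Md + q ^ 2 • Tc Mt) - (PMd + q ^ 2 • Tc PMt)‖ := by
      rw [← sqrt_sq_div hB.le m]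
      exact sqrt_mul_sq_add_mul_sq_le hB.le (by positivity) (norm_nonneg _) (norm_nonneg _)
    _ ≤ √B * (Cint * ε * Mr)
        + B / √m * (Cint * ε * Dt + q ^ 2 * (Cint * (Cint * ε * Mr))) := by
      gcongr
    _ = Cint * ε * (√B * Mr + B / √m * Dt) + Cint ^ 2 * ε * (B / √m * q ^ 2 * Mr) := by ring
    _ ≤ (Cint + Cint ^ 2) * ε * (√B * Mr + B / √m * Dt)
        + (Cint + Cint ^ 2) * ε * (B / √m * q ^ 2 * Mr) := by
      gcongr
      · exact le_add_of_nonneg_right (sq_nonneg Cint)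
      · exact le_add_of_nonneg_left hCint.le
    _ = (Cint + Cint ^ 2) * ε * (√B * (1 + √(B / m) * q ^ 2) * Mr + B / √m * Dt) := by
      rw [← sqrt_mul_sqrt_div_self hB.le]
      ring
end
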